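/- If the partition X_0 < X_1 < ⋯ < X_n satisfies the equidistribution equation with γ = 2/5, then sqrt( Σ_{i=0}^{n−1} ∫_{X_i}^{X_{i+1}} (L_i(S) − f(S))² g(S) dS ) ≤ sqrt( 2⁶ · α_h · (X_n − X_0)⁵ ) · n^{−2}. -/

import Mathlib

open MeasureTheory intervalIntegral

/-- `Ĝ_i` transported to the subinterval `[a, b]`:
`G(S) = Ĝ_i((S - a)/(b - a))` where `ĝ_i(ξ) = g(a + (b - a)ξ)` and
`Ĝ_i(t) = ∫_0^t ĝ_i(ξ) ξ²(1-ξ)³/3 dξ + ∫_t^1 ĝ_i(ξ) (1-ξ)²ξ³/3 dξ`. -/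
noncomputable def weightG (g : ℝ → ℝ) (a b S : ℝ) : ℝ :=
    (∫ ξ in (0:ℝ)..((S - a) / (b - a)), g (a + (b - a) * ξ) * (ξ ^ 2 * (1 - ξ) ^ 3 / 3))
  + (∫ ξ in ((S - a) / (b - a))..(1:ℝ), g (a + (b - a) * ξ) * ((1 - ξ) ^ 2 * ξ ^ 3 / 3))

/-- Linear interpolant of `f` on `[a, b]`:
`L(S) = ((b - S)/(b - a)) f(a) + ((S - a)/(b - a)) f(b)`. -/
noncomputable def splineL (f : ℝ → ℝ) (a b S : ℝ) : ℝ :=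
  ((b - S) / (b - a)) * f a + ((S - a) / (b - a)) * f b

/-- The weighted curvature integral `∫_a^b G(S) (f″(S))² dS` on a subinterval `[a, b]`. -/
noncomputable def curvInt (f g : ℝ → ℝ) (a b : ℝ) : ℝ :=
  ∫ S in a..b, weightG g a b S * (deriv (deriv f) S) ^ 2

/-- The intensity parameter
`α_h = [(1/(X_n − X_0)) Σ_i h_i ((1/h_i) ∫_{X_i}^{X_{i+1}} G(S)(f″(S))² dS)^{γ/2}]^{2/γ}`. -/
noncomputable def alphaH (f g : ℝ → ℝ) (γ : ℝ) (n : ℕ) (X : ℕ → ℝ) : ℝ :=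
  ((1 / (X n - X 0)) * ∑ i ∈ Finset.range n, (X (i + 1) - X i) *
      ((1 / (X (i + 1) - X i)) * curvInt f g (X i) (X (i + 1))) ^ (γ / 2)) ^ (2 / γ)

/-- The adaptation function
`ρ_i = (1 + (1/(α_h h_i)) ∫_{X_i}^{X_{i+1}} G(S)(f″(S))² dS)^{γ/2}`. -/
noncomputable def rhoAdapt (f g : ℝ → ℝ) (γ : ℝ) (n : ℕ) (X : ℕ → ℝ) (i : ℕ) : ℝ :=
  (1 + (1 / (alphaH f g γ n X * (X (i + 1) - X i))) * curvInt f g (X i) (X (i + 1))) ^ (γ / 2)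

open Set

/-! On a cell `[a, b]` of length `h`, two applications of the fundamental theorem of calculus
give the Peano-kernel form of the interpolation error,
`L(S) - f(S) = ((b-S)/h) ∫_a^S (t-a) f'' + ((S-a)/h) ∫_S^b (b-t) f''`.
Cauchy–Schwarz bounds its square by `∫_a^S f''²` and `∫_S^b f''²` with polynomial weights, and
after multiplying by `g` and exchanging the order of integration these weights add up to exactly
`h⁶ G`; hence the weighted L² error on the cell is at most `2 h⁴ ∫ G f''²`.

For `γ = 2/5` this is at most `2 α (h_i ρ_i)⁵`, and equidistribution makes every `h_i ρ_i` equal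
to `M / n` with `M = Σ h_j ρ_j`. Subadditivity of `x ↦ x^{γ/2}` splits `M` into
`Σ h_j = X_n - X_0` plus `α^{-γ/2} Σ h_j (C_j/h_j)^{γ/2}`, which is again `X_n - X_0` by the very
definition of `α`. Summing `n` cells gives `2 α n (2 (X_n - X_0) / n)⁵`. -/

theorem sq_integral_mul_le {α : Type*} [MeasurableSpace α] {μ : Measure α} {f u : α → ℝ}
    (hf : Integrable (fun x => f x ^ 2) μ) (hu : Integrable (fun x => u x ^ 2) μ)
    (hfu : Integrable (fun x => f x * u x) μ) :
    (∫ x, f x * u x ∂μ) ^ 2 ≤ (∫ x, f x ^ 2 ∂μ) * ∫ x, u x ^ 2 ∂μ := by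
  have hquad : ∀ s : ℝ, 0 ≤ (∫ x, f x ^ 2 ∂μ) * (s * s) + (-2 * ∫ x, f x * u x ∂μ) * s
      + ∫ x, u x ^ 2 ∂μ := by
    intro s
    have hexp : ∫ x, (s * f x - u x) ^ 2 ∂μ = (∫ x, f x ^ 2 ∂μ) * (s * s)
        + (-2 * ∫ x, f x * u x ∂μ) * s + ∫ x, u x ^ 2 ∂μ := by
      have hsplit : ∀ x, (s * f x - u x) ^ 2 = (s * s) * f x ^ 2 + (-2 * s) * (f x * u x)
          + u x ^ 2 := fun x => by ring
      simp_rw [hsplit]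
      have hint : Integrable (fun x => s * s * f x ^ 2 + -2 * s * (f x * u x)) μ :=
        (hf.const_mul _).add (hfu.const_mul _)
      rw [integral_add hint hu,
        integral_add (hf.const_mul _) (hfu.const_mul _), MeasureTheory.integral_const_mul,
        MeasureTheory.integral_const_mul]
      ring
    exact hexp ▸ integral_nonneg fun x => sq_nonneg _
  have := discrim_le_zero hquad
  rw [discrim] at this
  linarith

theorem sq_intervalIntegral_mul_le {a b : ℝ} (hab : a ≤ b) {f u : ℝ → ℝ}
    (hf : ContinuousOn f (Icc a b)) (hu : ContinuousOn u (Icc a b)) :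
    (∫ t in a..b, f t * u t) ^ 2 ≤ (∫ t in a..b, f t ^ 2) * ∫ t in a..b, u t ^ 2 := by
  simp only [intervalIntegral.integral_of_le hab]
  exact sq_integral_mul_le ((hf.pow 2).integrableOn_Icc.mono_set Ioc_subset_Icc_self)
    ((hu.pow 2).integrableOn_Icc.mono_set Ioc_subset_Icc_self)
    ((hf.mul hu).integrableOn_Icc.mono_set Ioc_subset_Icc_self)

section Primitive

variable {a b x : ℝ} {u : ℝ → ℝ}

theorem ContinuousOn.hasDerivAt_integral_right (hu : ContinuousOn u (Icc a b)) {c : ℝ}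
    (hc : c ∈ Icc a b) (hx : x ∈ Ioo a b) :
    HasDerivAt (fun S => ∫ t in c..S, u t) (u x) x :=
  intervalIntegral.integral_hasDerivAt_right
    ((hu.mono (uIcc_subset_Icc hc (Ioo_subset_Icc_self hx))).intervalIntegrable)
    ((hu.mono Ioo_subset_Icc_self).stronglyMeasurableAtFilter isOpen_Ioo x hx)
    (hu.continuousAt (Icc_mem_nhds hx.1 hx.2))

theorem ContinuousOn.hasDerivAt_integral_left (hu : ContinuousOn u (Icc a b)) {c : ℝ}
    (hc : c ∈ Icc a b) (hx : x ∈ Ioo a b) :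
    HasDerivAt (fun S => ∫ t in S..c, u t) (-u x) x :=
  intervalIntegral.integral_hasDerivAt_left
    ((hu.mono (uIcc_subset_Icc (Ioo_subset_Icc_self hx) hc)).intervalIntegrable)
    ((hu.mono Ioo_subset_Icc_self).stronglyMeasurableAtFilter isOpen_Ioo x hx)
    (hu.continuousAt (Icc_mem_nhds hx.1 hx.2))

variable (hab : a ≤ b) {v : ℝ → ℝ} (hu : ContinuousOn u (Icc a b)) (hv : ContinuousOn v (Icc a b))
include hab hu hv

theorem integral_primitive_mul_eq :
    ∫ S in a..b, (∫ t in a..S, u t) * v S = ∫ t in a..b, u t * ∫ s in t..b, v s := by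
  have hIoo : Ioo (min a b) (max a b) = Ioo a b := by rw [min_eq_left hab, max_eq_right hab]
  have hparts := intervalIntegral.integral_mul_deriv_eq_deriv_mul_of_hasDerivAt
    (u := fun S => ∫ t in a..S, u t) (v := fun S => -∫ s in S..b, v s)
    (continuousOn_primitive_interval (uIcc_of_le hab ▸ hu.integrableOn_Icc))
    (continuousOn_primitive_interval_left (uIcc_of_le hab ▸ hv.integrableOn_Icc)).neg
    (fun x hx => hu.hasDerivAt_integral_right (left_mem_Icc.2 hab) (hIoo ▸ hx))
    (fun x hx => by
      simpa using (hv.hasDerivAt_integral_left (right_mem_Icc.2 hab) (hIoo ▸ hx)).fun_neg)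
    (hu.intervalIntegrable_of_Icc hab) (hv.intervalIntegrable_of_Icc hab)
  simp only [intervalIntegral.integral_same, neg_zero, mul_zero, zero_mul, sub_zero, zero_sub]
    at hparts
  rw [hparts, ← intervalIntegral.integral_neg]
  simp only [mul_neg, neg_neg]

theorem integral_primitive_left_mul_eq :
    ∫ S in a..b, (∫ t in S..b, u t) * v S = ∫ t in a..b, u t * ∫ s in a..t, v s := by
  have hIoo : Ioo (min a b) (max a b) = Ioo a b := by rw [min_eq_left hab, max_eq_right hab]
  have hparts := intervalIntegral.integral_mul_deriv_eq_deriv_mul_of_hasDerivAt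
    (u := fun S => ∫ t in S..b, u t) (v := fun S => ∫ s in a..S, v s)
    (continuousOn_primitive_interval_left (uIcc_of_le hab ▸ hu.integrableOn_Icc))
    (continuousOn_primitive_interval (uIcc_of_le hab ▸ hv.integrableOn_Icc))
    (fun x hx => hu.hasDerivAt_integral_left (right_mem_Icc.2 hab) (hIoo ▸ hx))
    (fun x hx => hv.hasDerivAt_integral_right (left_mem_Icc.2 hab) (hIoo ▸ hx))
    (hu.intervalIntegrable_of_Icc hab).neg (hv.intervalIntegrable_of_Icc hab)
  simp only [intervalIntegral.integral_same, mul_zero, zero_mul, sub_zero, zero_sub] at hparts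
  rw [hparts, ← intervalIntegral.integral_neg]
  simp only [neg_mul, neg_neg]

end Primitive

section Weight

variable {a b : ℝ}

theorem weightG_eq (hab : a ≠ b) (g : ℝ → ℝ) (t : ℝ) :
    weightG g a b t = ((∫ S in a..t, g S * ((S - a) ^ 2 * (b - S) ^ 3 / 3))
      + ∫ S in t..b, g S * ((S - a) ^ 3 * (b - S) ^ 2 / 3)) / (b - a) ^ 6 := by
  have hh : b - a ≠ 0 := sub_ne_zero.2 hab.symm
  have rescale : ∀ (F : ℝ → ℝ) (x y : ℝ), ∫ ξ in x..y, F (a + (b - a) * ξ)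
      = (∫ S in a + (b - a) * x..a + (b - a) * y, F S) / (b - a) := fun F x y => by
    rw [intervalIntegral.integral_comp_add_mul F hh, smul_eq_mul, inv_mul_eq_div]
  set Fl := fun S => g S * ((S - a) ^ 2 * (b - S) ^ 3 / 3) / (b - a) ^ 5
  set Fr := fun S => g S * ((S - a) ^ 3 * (b - S) ^ 2 / 3) / (b - a) ^ 5
  have hleft : (fun ξ => g (a + (b - a) * ξ) * (ξ ^ 2 * (1 - ξ) ^ 3 / 3))
      = fun ξ => Fl (a + (b - a) * ξ) := by
    funext ξ; simp only [Fl]; field_simp; ring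
  have hright : (fun ξ => g (a + (b - a) * ξ) * ((1 - ξ) ^ 2 * ξ ^ 3 / 3))
      = fun ξ => Fr (a + (b - a) * ξ) := by
    funext ξ; simp only [Fr]; field_simp; ring
  have ht : a + (b - a) * ((t - a) / (b - a)) = t := by field_simp; ring
  rw [weightG, hleft, hright, rescale Fl, rescale Fr, ht, mul_zero, add_zero, mul_one,
    add_sub_cancel, intervalIntegral.integral_div, intervalIntegral.integral_div]
  field_simp

theorem weightG_nonneg {g : ℝ → ℝ} (hab : a < b) (hg : ∀ S ∈ Icc a b, 0 ≤ g S) {t : ℝ}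
    (ht : t ∈ Icc a b) : 0 ≤ weightG g a b t := by
  have hkernel : ∀ S ∈ Icc a b, ∀ m k : ℕ, 0 ≤ g S * ((S - a) ^ m * (b - S) ^ k / 3) :=
    fun S hS m k => mul_nonneg (hg S hS)
      (by have := sub_nonneg.2 hS.1; have := sub_nonneg.2 hS.2; positivity)
  rw [weightG_eq hab.ne]
  have hleft : 0 ≤ ∫ S in a..t, g S * ((S - a) ^ 2 * (b - S) ^ 3 / 3) :=
    intervalIntegral.integral_nonneg ht.1 fun S hS => hkernel S ⟨hS.1, hS.2.trans ht.2⟩ 2 3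
  have hright : 0 ≤ ∫ S in t..b, g S * ((S - a) ^ 3 * (b - S) ^ 2 / 3) :=
    intervalIntegral.integral_nonneg ht.2 fun S hS => hkernel S ⟨ht.1.trans hS.1, hS.2⟩ 3 2
  positivity

end Weight

section Spline

variable {a b : ℝ} {f f' f'' g : ℝ → ℝ}

theorem splineL_sub_eq_integral (hab : a < b) (hf : ContinuousOn f (Icc a b))
    (hf' : ContinuousOn f' (Icc a b)) (hf'' : ContinuousOn f'' (Icc a b))
    (hd : ∀ t ∈ Ioo a b, HasDerivAt f (f' t) t) (hd' : ∀ t ∈ Ioo a b, HasDerivAt f' (f'' t) t)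
    {S : ℝ} (hS : S ∈ Icc a b) :
    splineL f a b S - f S = (b - S) / (b - a) * (∫ t in a..S, (t - a) * f'' t)
      + (S - a) / (b - a) * ∫ t in S..b, (b - t) * f'' t := by
  have hleft : Icc a S ⊆ Icc a b := Icc_subset_Icc_right hS.2
  have hright : Icc S b ⊆ Icc a b := Icc_subset_Icc_left hS.1
  have ftc_left : ∫ t in a..S, (t - a) * f'' t = (S - a) * f' S - f S + f a := by
    have hderiv : ∀ t ∈ Ioo a S,
        HasDerivAt (fun t => (t - a) * f' t - f t) ((t - a) * f'' t) t := fun t ht => by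
      have ht' : t ∈ Ioo a b := ⟨ht.1, ht.2.trans_le hS.2⟩
      exact ((((hasDerivAt_id' t).sub_const a).fun_mul (hd' t ht')).fun_sub
        (hd t ht')).congr_deriv (by ring)
    rw [intervalIntegral.integral_eq_sub_of_hasDerivAt_of_le hS.1
      (f := fun t => (t - a) * f' t - f t)
      (((continuousOn_id.sub continuousOn_const).mul hf').sub hf |>.mono hleft) hderiv
      (((continuousOn_id.sub continuousOn_const).mul hf'').mono hleft
        |>.intervalIntegrable_of_Icc hS.1)]
    ring
  have ftc_right : ∫ t in S..b, (b - t) * f'' t = f b - (b - S) * f' S - f S := by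
    have hderiv : ∀ t ∈ Ioo S b,
        HasDerivAt (fun t => (b - t) * f' t + f t) ((b - t) * f'' t) t := fun t ht => by
      have ht' : t ∈ Ioo a b := ⟨hS.1.trans_lt ht.1, ht.2⟩
      exact ((((hasDerivAt_id' t).const_sub b).fun_mul (hd' t ht')).fun_add
        (hd t ht')).congr_deriv (by ring)
    rw [intervalIntegral.integral_eq_sub_of_hasDerivAt_of_le hS.2
      (f := fun t => (b - t) * f' t + f t)
      (((continuousOn_const.sub continuousOn_id).mul hf').add hf |>.mono hright) hderiv
      (((continuousOn_const.sub continuousOn_id).mul hf'').mono hright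
        |>.intervalIntegrable_of_Icc hS.2)]
    ring
  rw [ftc_left, ftc_right, splineL]
  field_simp [(sub_pos.2 hab).ne']
  ring

theorem sq_splineL_sub_le (hab : a < b) (hf : ContinuousOn f (Icc a b))
    (hf' : ContinuousOn f' (Icc a b)) (hf'' : ContinuousOn f'' (Icc a b))
    (hd : ∀ t ∈ Ioo a b, HasDerivAt f (f' t) t) (hd' : ∀ t ∈ Ioo a b, HasDerivAt f' (f'' t) t)
    {S : ℝ} (hS : S ∈ Icc a b) :
    (splineL f a b S - f S) ^ 2 ≤ 2 / (b - a) ^ 2 *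
      ((S - a) ^ 3 * (b - S) ^ 2 / 3 * (∫ t in a..S, f'' t ^ 2)
        + (S - a) ^ 2 * (b - S) ^ 3 / 3 * ∫ t in S..b, f'' t ^ 2) := by
  have hleft : ContinuousOn f'' (Icc a S) := hf''.mono (Icc_subset_Icc_right hS.2)
  have hright : ContinuousOn f'' (Icc S b) := hf''.mono (Icc_subset_Icc_left hS.1)
  have hP : (∫ t in a..S, (t - a) * f'' t) ^ 2 ≤ (S - a) ^ 3 / 3 * ∫ t in a..S, f'' t ^ 2 := by
    have hkernel : ∫ t in a..S, (t - a) ^ 2 = (S - a) ^ 3 / 3 := by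
      norm_num [intervalIntegral.integral_comp_sub_right (fun t => t ^ 2) a, integral_pow]
    rw [← hkernel]
    exact sq_intervalIntegral_mul_le hS.1 (by fun_prop) hleft
  have hQ : (∫ t in S..b, (b - t) * f'' t) ^ 2 ≤ (b - S) ^ 3 / 3 * ∫ t in S..b, f'' t ^ 2 := by
    have hkernel : ∫ t in S..b, (b - t) ^ 2 = (b - S) ^ 3 / 3 := by
      norm_num [intervalIntegral.integral_comp_sub_left (fun t => t ^ 2) b, integral_pow]
    rw [← hkernel]
    exact sq_intervalIntegral_mul_le hS.2 (by fun_prop) hright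
  rw [splineL_sub_eq_integral hab hf hf' hf'' hd hd' hS]
  calc _ ≤ 2 * (((b - S) / (b - a) * ∫ t in a..S, (t - a) * f'' t) ^ 2
        + ((S - a) / (b - a) * ∫ t in S..b, (b - t) * f'' t) ^ 2) := add_sq_le
    _ = 2 / (b - a) ^ 2 * ((b - S) ^ 2 * (∫ t in a..S, (t - a) * f'' t) ^ 2
        + (S - a) ^ 2 * (∫ t in S..b, (b - t) * f'' t) ^ 2) := by
      field_simp
    _ ≤ 2 / (b - a) ^ 2 * ((b - S) ^ 2 * ((S - a) ^ 3 / 3 * ∫ t in a..S, f'' t ^ 2)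
        + (S - a) ^ 2 * ((b - S) ^ 3 / 3 * ∫ t in S..b, f'' t ^ 2)) := by
      gcongr
    _ = _ := by ring

theorem integral_sq_splineL_sub_mul_le (hab : a < b) (hf : ContinuousOn f (Icc a b))
    (hf' : ContinuousOn f' (Icc a b)) (hf'' : ContinuousOn f'' (Icc a b))
    (hd : ∀ t ∈ Ioo a b, HasDerivAt f (f' t) t) (hd' : ∀ t ∈ Ioo a b, HasDerivAt f' (f'' t) t)
    (hg0 : ∀ S ∈ Icc a b, 0 ≤ g S) (hgc : ContinuousOn g (Icc a b)) :
    ∫ S in a..b, (splineL f a b S - f S) ^ 2 * g S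
      ≤ 2 * (b - a) ^ 4 * ∫ t in a..b, weightG g a b t * f'' t ^ 2 := by
  have hIcc : uIcc a b = Icc a b := uIcc_of_le hab.le
  set w₁ : ℝ → ℝ := fun S => g S * ((S - a) ^ 3 * (b - S) ^ 2 / 3)
  set w₂ : ℝ → ℝ := fun S => g S * ((S - a) ^ 2 * (b - S) ^ 3 / 3)
  have hw₁ : ContinuousOn w₁ (Icc a b) := hgc.mul (by fun_prop)
  have hw₂ : ContinuousOn w₂ (Icc a b) := hgc.mul (by fun_prop)
  have hsq : ContinuousOn (fun t => f'' t ^ 2) (Icc a b) := hf''.pow 2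
  have hR₁ : ContinuousOn (fun S => ∫ t in a..S, f'' t ^ 2) (Icc a b) :=
    hIcc ▸ continuousOn_primitive_interval (hIcc ▸ hsq.integrableOn_Icc)
  have hR₂ : ContinuousOn (fun S => ∫ t in S..b, f'' t ^ 2) (Icc a b) :=
    hIcc ▸ continuousOn_primitive_interval_left (hIcc ▸ hsq.integrableOn_Icc)
  have hpointwise : ∀ S ∈ Icc a b, (splineL f a b S - f S) ^ 2 * g S ≤ 2 / (b - a) ^ 2 *
      ((∫ t in a..S, f'' t ^ 2) * w₁ S + (∫ t in S..b, f'' t ^ 2) * w₂ S) := fun S hS => by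
    calc _ ≤ 2 / (b - a) ^ 2 * ((S - a) ^ 3 * (b - S) ^ 2 / 3 * (∫ t in a..S, f'' t ^ 2)
          + (S - a) ^ 2 * (b - S) ^ 3 / 3 * ∫ t in S..b, f'' t ^ 2) * g S :=
          mul_le_mul_of_nonneg_right (sq_splineL_sub_le hab hf hf' hf'' hd hd' hS) (hg0 S hS)
      _ = _ := by simp only [w₁, w₂]; ring
  have hswap : ∫ S in a..b, ((∫ t in a..S, f'' t ^ 2) * w₁ S + (∫ t in S..b, f'' t ^ 2) * w₂ S)
      = (b - a) ^ 6 * ∫ t in a..b, weightG g a b t * f'' t ^ 2 := by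
    have hI₁ : IntervalIntegrable (fun S => (∫ t in a..S, f'' t ^ 2) * w₁ S) volume a b :=
      (hR₁.mul hw₁).intervalIntegrable_of_Icc hab.le
    have hI₂ : IntervalIntegrable (fun S => (∫ t in S..b, f'' t ^ 2) * w₂ S) volume a b :=
      (hR₂.mul hw₂).intervalIntegrable_of_Icc hab.le
    have hJ₁ : IntervalIntegrable (fun t => f'' t ^ 2 * ∫ s in t..b, w₁ s) volume a b :=
      (hsq.mul (hIcc ▸ continuousOn_primitive_interval_left
        (hIcc ▸ hw₁.integrableOn_Icc))).intervalIntegrable_of_Icc hab.le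
    have hJ₂ : IntervalIntegrable (fun t => f'' t ^ 2 * ∫ s in a..t, w₂ s) volume a b :=
      (hsq.mul (hIcc ▸ continuousOn_primitive_interval
        (hIcc ▸ hw₂.integrableOn_Icc))).intervalIntegrable_of_Icc hab.le
    rw [intervalIntegral.integral_add hI₁ hI₂, integral_primitive_mul_eq hab.le hsq hw₁,
      integral_primitive_left_mul_eq hab.le hsq hw₂, ← intervalIntegral.integral_add hJ₁ hJ₂,
      ← intervalIntegral.integral_const_mul]
    refine intervalIntegral.integral_congr fun t _ => ?_
    simp only [weightG_eq hab.ne, w₁, w₂]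
    field_simp [(sub_pos.2 hab).ne']
    ring
  calc _ ≤ ∫ S in a..b, 2 / (b - a) ^ 2 *
        ((∫ t in a..S, f'' t ^ 2) * w₁ S + (∫ t in S..b, f'' t ^ 2) * w₂ S) := by
        refine intervalIntegral.integral_mono_on hab.le ?_ ?_ hpointwise
        · exact ContinuousOn.intervalIntegrable_of_Icc hab.le
            (((by unfold splineL; fun_prop : Continuous _).continuousOn.sub hf).pow 2 |>.mul hgc)
        · exact ContinuousOn.intervalIntegrable_of_Icc hab.le
            (continuousOn_const.mul ((hR₁.mul hw₁).add (hR₂.mul hw₂)))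
    _ = 2 * (b - a) ^ 4 * ∫ t in a..b, weightG g a b t * f'' t ^ 2 := by
      rw [intervalIntegral.integral_const_mul, hswap]
      field_simp [(sub_pos.2 hab).ne']

end Spline

section ContDiff

variable {a b : ℝ} {f g : ℝ → ℝ}

theorem DifferentiableOn.hasDerivAt_derivWithin_Icc (hf : DifferentiableOn ℝ f (Icc a b))
    {t : ℝ} (ht : t ∈ Ioo a b) : HasDerivAt f (derivWithin f (Icc a b) t) t :=
  (hf t (Ioo_subset_Icc_self ht)).hasDerivWithinAt.hasDerivAt (Icc_mem_nhds ht.1 ht.2)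

theorem integral_sq_splineL_sub_mul_le_curvInt (hab : a < b) (hf : ContDiffOn ℝ 2 f (Icc a b))
    (hg0 : ∀ S ∈ Icc a b, 0 ≤ g S) (hgc : ContinuousOn g (Icc a b)) :
    ∫ S in a..b, (splineL f a b S - f S) ^ 2 * g S ≤ 2 * (b - a) ^ 4 * curvInt f g a b := by
  have hs : UniqueDiffOn ℝ (Icc a b) := uniqueDiffOn_Icc hab
  have hf₁ : ContDiffOn ℝ 1 (derivWithin f (Icc a b)) (Icc a b) := hf.derivWithin hs le_rfl
  have hd : ∀ t ∈ Ioo a b, HasDerivAt f (derivWithin f (Icc a b) t) t := fun _ ht =>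
    (hf.differentiableOn two_ne_zero).hasDerivAt_derivWithin_Icc ht
  have hd' : ∀ t ∈ Ioo a b, HasDerivAt (derivWithin f (Icc a b))
      (derivWithin (derivWithin f (Icc a b)) (Icc a b) t) t := fun _ ht =>
    (hf₁.differentiableOn one_ne_zero).hasDerivAt_derivWithin_Icc ht
  have hcurv : curvInt f g a b = ∫ t in a..b,
      weightG g a b t * derivWithin (derivWithin f (Icc a b)) (Icc a b) t ^ 2 := by
    refine intervalIntegral.integral_congr_uIoo fun t ht => ?_
    rw [uIoo_of_lt hab] at ht
    have hderiv : deriv f =ᶠ[nhds t] derivWithin f (Icc a b) :=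
      Filter.eventually_of_mem (Ioo_mem_nhds ht.1 ht.2) fun s hs => (hd s hs).deriv
    simp only [((hd' t ht).congr_of_eventuallyEq hderiv).deriv]
  rw [hcurv]
  exact integral_sq_splineL_sub_mul_le hab hf.continuousOn
    (hf.continuousOn_derivWithin hs one_le_two) (hf₁.continuousOn_derivWithin hs le_rfl)
    hd hd' hg0 hgc

theorem curvInt_nonneg (hab : a < b) (hg0 : ∀ S ∈ Icc a b, 0 ≤ g S) : 0 ≤ curvInt f g a b :=
  intervalIntegral.integral_nonneg hab.le fun _ ht =>
    mul_nonneg (weightG_nonneg hab hg0 ht) (sq_nonneg _)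

end ContDiff

section Equidistribution

variable {f g : ℝ → ℝ} {γ : ℝ} {n : ℕ} {X : ℕ → ℝ}

theorem Icc_subset_Icc_of_lt_succ (hX : ∀ i < n, X i < X (i + 1)) {i : ℕ} (hi : i < n) :
    Icc (X i) (X (i + 1)) ⊆ Icc (X 0) (X n) := by
  have hmono : MonotoneOn X (Iic n) :=
    (strictMonoOn_Iic_of_lt_succ fun m hm => by simpa using hX m hm).monotoneOn
  exact Icc_subset_Icc (hmono (by simp) (by simp; omega) (Nat.zero_le i))
    (hmono (by simp; omega) (by simp) hi)

theorem rpow_alphaH_mul (hX : ∀ i < n, X i < X (i + 1))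
    (hC : ∀ i < n, 0 ≤ curvInt f g (X i) (X (i + 1))) (hq : 0 < γ / 2)
    (hα : 0 < alphaH f g γ n X) :
    alphaH f g γ n X ^ (γ / 2) * (X n - X 0) = ∑ i ∈ Finset.range n, (X (i + 1) - X i) *
      ((1 / (X (i + 1) - X i)) * curvInt f g (X i) (X (i + 1))) ^ (γ / 2) := by
  set T := ∑ i ∈ Finset.range n, (X (i + 1) - X i) *
    ((1 / (X (i + 1) - X i)) * curvInt f g (X i) (X (i + 1))) ^ (γ / 2)
  have hh : ∀ i ∈ Finset.range n, 0 ≤ X (i + 1) - X i := fun i hi =>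
    (sub_pos.2 (hX i (Finset.mem_range.1 hi))).le
  have hT : 0 ≤ T := Finset.sum_nonneg fun i hi => mul_nonneg (hh i hi)
    (Real.rpow_nonneg (mul_nonneg (one_div_nonneg.2 (hh i hi)) (hC i (Finset.mem_range.1 hi))) _)
  have hL : 0 ≤ X n - X 0 := Finset.sum_range_sub X n ▸ Finset.sum_nonneg hh
  have hroot : alphaH f g γ n X ^ (γ / 2) = 1 / (X n - X 0) * T := by
    rw [alphaH, show 2 / γ = (γ / 2)⁻¹ from (inv_div γ 2).symm,
      Real.rpow_inv_rpow (by positivity) hq.ne']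
  -- `1 / 0 = 0`, so a degenerate partition would force `α = 0`
  have hL0 : X n - X 0 ≠ 0 := by
    rintro hL0
    have hpos := Real.rpow_pos_of_pos hα (γ / 2)
    rw [hroot, hL0, div_zero, zero_mul] at hpos
    exact hpos.false
  rw [hroot]
  field_simp

theorem sum_mul_rhoAdapt_le (hX : ∀ i < n, X i < X (i + 1))
    (hC : ∀ i < n, 0 ≤ curvInt f g (X i) (X (i + 1))) (hγ : 0 < γ) (hγ2 : γ ≤ 2)
    (hα : 0 < alphaH f g γ n X) :
    ∑ i ∈ Finset.range n, (X (i + 1) - X i) * rhoAdapt f g γ n X i ≤ 2 * (X n - X 0) := by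
  set α := alphaH f g γ n X
  have hh : ∀ i ∈ Finset.range n, 0 < X (i + 1) - X i := fun i hi =>
    sub_pos.2 (hX i (Finset.mem_range.1 hi))
  have hq : 0 < γ / 2 := by positivity
  have hterm : ∀ i ∈ Finset.range n, (X (i + 1) - X i) * rhoAdapt f g γ n X i
      ≤ (X (i + 1) - X i) + (X (i + 1) - X i) *
        ((1 / (X (i + 1) - X i)) * curvInt f g (X i) (X (i + 1))) ^ (γ / 2) / α ^ (γ / 2) := by
    intro i hi
    have hCi : 0 ≤ (1 / (X (i + 1) - X i)) * curvInt f g (X i) (X (i + 1)) :=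
      mul_nonneg (one_div_nonneg.2 (hh i hi).le) (hC i (Finset.mem_range.1 hi))
    have hsub := Real.rpow_add_le_add_rpow zero_le_one (div_nonneg hCi hα.le) hq.le
      (by linarith)
    rw [Real.one_rpow, Real.div_rpow hCi hα.le] at hsub
    have hbase : 1 / (α * (X (i + 1) - X i)) * curvInt f g (X i) (X (i + 1))
        = (1 / (X (i + 1) - X i)) * curvInt f g (X i) (X (i + 1)) / α := by
      field_simp
    rw [rhoAdapt, hbase]
    calc _ ≤ _ := mul_le_mul_of_nonneg_left hsub (hh i hi).le
      _ = _ := by ring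
  calc _ ≤ _ := Finset.sum_le_sum hterm
    _ = (X n - X 0) + α ^ (γ / 2) * (X n - X 0) / α ^ (γ / 2) := by
      rw [Finset.sum_add_distrib, Finset.sum_range_sub, ← Finset.sum_div,
        rpow_alphaH_mul hX hC hq hα]
    _ = 2 * (X n - X 0) := by field_simp; ring

theorem pow_four_mul_curvInt_le {i : ℕ} (hi : X i < X (i + 1))
    (hC : 0 ≤ curvInt f g (X i) (X (i + 1))) (hα : 0 < alphaH f g (2 / 5) n X) :
    (X (i + 1) - X i) ^ 4 * curvInt f g (X i) (X (i + 1))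
      ≤ alphaH f g (2 / 5) n X * ((X (i + 1) - X i) * rhoAdapt f g (2 / 5) n X i) ^ 5 := by
  set α := alphaH f g (2 / 5) n X
  set h := X (i + 1) - X i
  set x := 1 / (α * h) * curvInt f g (X i) (X (i + 1))
  have hh : 0 < h := sub_pos.2 hi
  have hx : 0 ≤ x := by positivity
  have hρ : rhoAdapt f g (2 / 5) n X i ^ 5 = 1 + x := by
    rw [rhoAdapt, ← Real.rpow_natCast, ← Real.rpow_mul (by positivity),
      show (2 / 5 : ℝ) / 2 * (5 : ℕ) = 1 by norm_num, Real.rpow_one]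
  calc h ^ 4 * curvInt f g (X i) (X (i + 1)) = α * h ^ 5 * x := by
        simp only [x]; field_simp
    _ ≤ α * h ^ 5 * (1 + x) := by gcongr; linarith
    _ = α * (h * rhoAdapt f g (2 / 5) n X i) ^ 5 := by rw [mul_pow, hρ]; ring

theorem integral_sq_splineL_sub_mul_le_rhoAdapt {i : ℕ} (hi : X i < X (i + 1))
    (hf : ContDiffOn ℝ 2 f (Icc (X i) (X (i + 1))))
    (hg0 : ∀ S ∈ Icc (X i) (X (i + 1)), 0 ≤ g S) (hgc : ContinuousOn g (Icc (X i) (X (i + 1))))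
    (hα : 0 < alphaH f g (2 / 5) n X) :
    ∫ S in (X i)..(X (i + 1)), (splineL f (X i) (X (i + 1)) S - f S) ^ 2 * g S
      ≤ 2 * alphaH f g (2 / 5) n X * ((X (i + 1) - X i) * rhoAdapt f g (2 / 5) n X i) ^ 5 := by
  have hpow := pow_four_mul_curvInt_le hi (curvInt_nonneg hi hg0) hα
  calc _ ≤ 2 * (X (i + 1) - X i) ^ 4 * curvInt f g (X i) (X (i + 1)) :=
        integral_sq_splineL_sub_mul_le_curvInt hi hf hg0 hgc
    _ ≤ _ := by linarith

end Equidistribution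

theorem equidistribution_explicit_bound_general
    (n : ℕ) (hn : 1 ≤ n) (X : ℕ → ℝ)
    (hXmono : ∀ i < n, X i < X (i + 1))
    (f g : ℝ → ℝ)
    (hf2 : ∀ i < n, ContDiffOn ℝ 2 f (Set.Icc (X i) (X (i + 1))))
    (hg0 : ∀ S ∈ Set.Icc (X 0) (X n), 0 ≤ g S)
    (hgc : ContinuousOn g (Set.Icc (X 0) (X n)))
    (hα : 0 < alphaH f g (2 / 5) n X)
    (hequi : ∀ i < n, (X (i + 1) - X i) * rhoAdapt f g (2 / 5) n X i =
      (1 / (n : ℝ)) * ∑ j ∈ Finset.range n, (X (j + 1) - X j) * rhoAdapt f g (2 / 5) n X j) :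
    Real.sqrt (∑ i ∈ Finset.range n,
        ∫ S in (X i)..(X (i + 1)), (splineL f (X i) (X (i + 1)) S - f S) ^ 2 * g S)
      ≤ Real.sqrt (2 ^ 6 * alphaH f g (2 / 5) n X * (X n - X 0) ^ 5) * ((n : ℝ) ^ 2)⁻¹ := by
  set α := alphaH f g (2 / 5) n X
  set M := ∑ j ∈ Finset.range n, (X (j + 1) - X j) * rhoAdapt f g (2 / 5) n X j
  have hcell : ∀ i < n, Icc (X i) (X (i + 1)) ⊆ Icc (X 0) (X n) := fun i hi =>
    Icc_subset_Icc_of_lt_succ hXmono hi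
  have hlocal : ∀ i ∈ Finset.range n, ∫ S in (X i)..(X (i + 1)),
      (splineL f (X i) (X (i + 1)) S - f S) ^ 2 * g S ≤ 2 * α * ((1 / (n : ℝ)) * M) ^ 5 := by
    intro i hi
    rw [Finset.mem_range] at hi
    rw [← hequi i hi]
    exact integral_sq_splineL_sub_mul_le_rhoAdapt (hXmono i hi) (hf2 i hi)
      (fun S hS => hg0 S (hcell i hi hS)) (hgc.mono (hcell i hi)) hα
  have hM : M ≤ 2 * (X n - X 0) := sum_mul_rhoAdapt_le hXmono
    (fun i hi => curvInt_nonneg (hXmono i hi) fun S hS => hg0 S (hcell i hi hS))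
    (by norm_num) (by norm_num) hα
  have hn' : (n : ℝ) ≠ 0 := Nat.cast_ne_zero.2 (by omega)
  have htotal : ∑ i ∈ Finset.range n, ∫ S in (X i)..(X (i + 1)),
      (splineL f (X i) (X (i + 1)) S - f S) ^ 2 * g S
      ≤ 2 ^ 6 * α * (X n - X 0) ^ 5 * (((n : ℝ) ^ 2)⁻¹) ^ 2 :=
    calc _ ≤ n * (2 * α * ((1 / (n : ℝ)) * M) ^ 5) := by
          simpa using Finset.sum_le_sum hlocal
      _ ≤ n * (2 * α * ((1 / (n : ℝ)) * (2 * (X n - X 0))) ^ 5) := by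
          gcongr ?_ * (_ * ?_)
          exact (Odd.pow_le_pow (by decide)).2 (by gcongr)
      _ = 2 ^ 6 * α * (X n - X 0) ^ 5 * (((n : ℝ) ^ 2)⁻¹) ^ 2 := by field_simp
  calc _ ≤ Real.sqrt (2 ^ 6 * α * (X n - X 0) ^ 5 * (((n : ℝ) ^ 2)⁻¹) ^ 2) :=
        Real.sqrt_le_sqrt htotal
    _ = _ := by rw [Real.sqrt_mul' _ (by positivity), Real.sqrt_sq (by positivity)]

/-- If the partition satisfies the equidistribution equation with `γ = 2/5`, then the weighted
L² spline error is bounded by `sqrt(2⁶ α_h (X_n − X_0)⁵) n⁻²`. -/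
theorem equidistribution_explicit_bound
    (n : ℕ) (hn : 1 ≤ n) (X : ℕ → ℝ) (hX0 : 0 < X 0)
    (hXmono : ∀ i < n, X i < X (i + 1))
    (f g : ℝ → ℝ)
    (hf : ContinuousOn f (Set.Icc (X 0) (X n)))
    (hf2 : ∀ i < n, ContDiffOn ℝ 2 f (Set.Icc (X i) (X (i + 1))))
    (hg0 : ∀ S ∈ Set.Icc (X 0) (X n), 0 ≤ g S)
    (hgc : ContinuousOn g (Set.Icc (X 0) (X n)))
    (hα : 0 < alphaH f g (2 / 5) n X)
    (hequi : ∀ i < n, (X (i + 1) - X i) * rhoAdapt f g (2 / 5) n X i =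
      (1 / (n : ℝ)) * ∑ j ∈ Finset.range n, (X (j + 1) - X j) * rhoAdapt f g (2 / 5) n X j) :
    Real.sqrt (∑ i ∈ Finset.range n,
        ∫ S in (X i)..(X (i + 1)), (splineL f (X i) (X (i + 1)) S - f S) ^ 2 * g S)
      ≤ Real.sqrt (2 ^ 6 * alphaH f g (2 / 5) n X * (X n - X 0) ^ 5) * ((n : ℝ) ^ 2)⁻¹ :=
  equidistribution_explicit_bound_general n hn X hXmono f g hf2 hg0 hgc hα hequi
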